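/- arXiv:1403.1126 — 4 statements merged into one kernel-verified Lean document; each statement's English description precedes it below -/
import Mathlib

section
/- If K₁, …, Kₘ are compact subsets of ℂ and K = K₁ × ⋯ × Kₘ, and every continuous function on K holomorphic on the interior of K is a uniform limit of polynomials on K, then each complement ℂ \ Kᵢ is connected. -/
/-!
If `ℂ \ Kᵢ` is disconnected, it has a bounded component `U`, whose frontier lies in `Kᵢ`; pick
`a ∈ U`. The function `z ↦ (zᵢ - a)⁻¹` is continuous on `K` and holomorphic near it, so it is
uniformly approximated by polynomials `P`. Freezing the other coordinates turns `P` into an entire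
function `g` of `zᵢ` with `q t = (t - a) g t - 1` uniformly small on `Kᵢ ⊇ frontier U`; but
`q a = -1`, contradicting the maximum modulus principle on `U`.
-/

open Metric Set Bornology

theorem isConnected_compl_closedBall {E : Type*} [NormedAddCommGroup E] [NormedSpace ℝ E]
    (h : 1 < Module.rank ℝ E) (x : E) {R : ℝ} (hR : 0 ≤ R) :
    IsConnected (closedBall x R)ᶜ := by
  have hpolar : (fun p : ℝ × E => x + p.1 • p.2) '' (Ioi R ×ˢ sphere 0 1) = (closedBall x R)ᶜ := by
    ext z
    simp only [mem_image, mem_prod, mem_Ioi, mem_sphere_zero_iff_norm, mem_compl_iff,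
      mem_closedBall, not_le, Prod.exists]
    constructor
    · rintro ⟨t, v, ⟨ht, hv⟩, rfl⟩
      rwa [dist_self_add_left, norm_smul, hv, mul_one, Real.norm_of_nonneg (hR.trans ht.le)]
    · intro hz
      have hz0 : ‖z - x‖ ≠ 0 := (hR.trans_lt (dist_eq_norm z x ▸ hz)).ne'
      refine ⟨‖z - x‖, ‖z - x‖⁻¹ • (z - x), ⟨by rwa [← dist_eq_norm], ?_⟩, ?_⟩
      · rw [norm_smul, norm_inv, norm_norm, inv_mul_cancel₀ hz0]
      · rw [smul_smul, mul_inv_cancel₀ hz0, one_smul, add_sub_cancel]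
  exact hpolar ▸ ((isConnected_Ioi).prod (isConnected_sphere h 0 zero_le_one)).image _
    (by fun_prop)

theorem IsOpen.frontier_connectedComponentIn_subset {α : Type*} [TopologicalSpace α]
    [LocallyConnectedSpace α] {F : Set α} (hF : IsOpen F) (x : α) :
    frontier (connectedComponentIn F x) ⊆ Fᶜ := by
  intro t ht htF
  obtain ⟨u, hut, hux⟩ := mem_closure_iff.mp ht.1 _ hF.connectedComponentIn
    (mem_connectedComponentIn htF)
  have : connectedComponentIn F t = connectedComponentIn F x :=
    (connectedComponentIn_eq hut).trans (connectedComponentIn_eq hux).symm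
  refine ht.2 ?_
  rw [hF.connectedComponentIn.interior_eq, ← this]
  exact mem_connectedComponentIn htF

theorem Bornology.IsBounded.exists_isBounded_connectedComponentIn_compl {E : Type*}
    [NormedAddCommGroup E] [NormedSpace ℝ E] (h : 1 < Module.rank ℝ E) {K : Set E}
    (hK : IsBounded K) (hKc : ¬ IsConnected Kᶜ) :
    ∃ a ∉ K, IsBounded (connectedComponentIn Kᶜ a) := by
  obtain ⟨R, hR, hKR⟩ := hK.subset_closedBall_lt 0 0
  have hball := isConnected_compl_closedBall h (0 : E) hR.le
  have hballK : (closedBall (0 : E) R)ᶜ ⊆ Kᶜ := compl_subset_compl.mpr hKR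
  obtain ⟨x₀, hx₀⟩ := hball.nonempty
  set V := connectedComponentIn Kᶜ x₀
  have hballV : (closedBall (0 : E) R)ᶜ ⊆ V :=
    hball.isPreconnected.subset_connectedComponentIn hx₀ hballK
  obtain ⟨a, ha, haV⟩ : ∃ a ∈ Kᶜ, a ∉ V := by
    by_contra! hV
    exact hKc ((subset_antisymm hV (connectedComponentIn_subset _ _)) ▸
      isConnected_connectedComponentIn_iff.mpr (hballK hx₀))
  refine ⟨a, ha, (isBounded_closedBall (x := (0 : E)) (r := R)).subset fun z hz => ?_⟩
  by_contra hzR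
  have hVa : V = connectedComponentIn Kᶜ a :=
    (connectedComponentIn_eq (hballV hzR)).trans (connectedComponentIn_eq hz).symm
  exact haV (hVa ▸ mem_connectedComponentIn ha)

theorem MvPolynomial.differentiable_eval_update {𝕜 σ : Type*} [NontriviallyNormedField 𝕜]
    [CompleteSpace 𝕜] [Fintype σ] [DecidableEq σ] (P : MvPolynomial σ 𝕜) (w : σ → 𝕜) (i : σ) :
    Differentiable 𝕜 (fun t => eval (Function.update w i t) P) := fun t =>
  ((AnalyticOnNhd.eval_mvPolynomial P _ (mem_univ _)).differentiableAt).comp t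
    (hasFDerivAt_update w t).differentiableAt

theorem Complex.not_forall_norm_sub_inv_lt {K U : Set ℂ} {a : ℂ} {C ε : ℝ} (hU : IsBounded U)
    (haU : a ∈ U) (hUK : frontier U ⊆ K) (ha : a ∉ K) (hC : ∀ t ∈ K, ‖t - a‖ ≤ C)
    (hCε : C * ε < 1) {g : ℂ → ℂ} (hg : Differentiable ℂ g) :
    ¬ ∀ t ∈ K, ‖g t - (t - a)⁻¹‖ < ε := by
  intro happrox
  set q : ℂ → ℂ := fun t => (t - a) * g t - 1
  have hq : Differentiable ℂ q := ((differentiable_id.sub_const a).mul hg).sub_const 1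
  have hq_frontier : ∀ t ∈ frontier U, ‖q t‖ ≤ C * ε := by
    intro t ht
    have hta : t - a ≠ 0 := sub_ne_zero.mpr fun h => ha (h ▸ hUK ht)
    have : q t = (t - a) * (g t - (t - a)⁻¹) := by simp only [q]; field_simp
    rw [this, norm_mul]
    exact mul_le_mul (hC t (hUK ht)) (happrox t (hUK ht)).le (norm_nonneg _)
      ((norm_nonneg _).trans (hC t (hUK ht)))
  have := Complex.norm_le_of_forall_mem_frontier_norm_le hU hq.diffContOnCl hq_frontier
    (subset_closure haU)
  simp only [sub_self, zero_mul, zero_sub, norm_neg, norm_one, q] at this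
  linarith

/-- **Necessity direction.** If `K₁, …, Kₘ` are nonempty compact subsets of `ℂ` and every
continuous function on `K = K₁ × ⋯ × Kₘ` holomorphic on the interior of `K` is a uniform
limit of polynomials on `K`, then each complement `ℂ \ Kᵢ` is connected. -/
theorem stmt1 (m : ℕ) (K : Fin m → Set ℂ)
    (hK : ∀ i, IsCompact (K i)) (hne : ∀ i, (K i).Nonempty)
    (happrox : ∀ f : (Fin m → ℂ) → ℂ,
      ContinuousOn f (Set.pi Set.univ K) →
      DifferentiableOn ℂ f (interior (Set.pi Set.univ K)) →
      ∀ ε > 0, ∃ P : MvPolynomial (Fin m) ℂ,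
        ∀ z ∈ Set.pi Set.univ K, ‖MvPolynomial.eval z P - f z‖ < ε) :
    ∀ i, IsConnected (K i)ᶜ := by
  intro i
  by_contra hKi
  obtain ⟨a, ha, hU⟩ := (hK i).isBounded.exists_isBounded_connectedComponentIn_compl
    (by simp) hKi
  obtain ⟨C, hC0, hC⟩ := ((hK i).image (continuous_sub_right a)).isBounded.exists_pos_norm_le
  have hf : DifferentiableOn ℂ (fun z : Fin m → ℂ => (z i - a)⁻¹) (pi univ K) := fun z hz =>
    ((differentiableAt_apply (𝕜 := ℂ) i z).sub_const a).inv
      (sub_ne_zero.mpr fun h => ha (h ▸ hz i (mem_univ i))) |>.differentiableWithinAt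
  obtain ⟨P, hP⟩ := happrox _ hf.continuousOn (hf.mono interior_subset) (2 * C)⁻¹ (by positivity)
  obtain ⟨w, hw⟩ : (pi univ K).Nonempty := univ_pi_nonempty_iff.mpr hne
  have hfrontier : frontier (connectedComponentIn (K i)ᶜ a) ⊆ K i := by
    simpa using (hK i).isClosed.isOpen_compl.frontier_connectedComponentIn_subset a
  refine Complex.not_forall_norm_sub_inv_lt (ε := (2 * C)⁻¹) hU (mem_connectedComponentIn ha)
    hfrontier ha (fun t ht => hC _ (mem_image_of_mem _ ht)) (by field_simp; norm_num)
    (P.differentiable_eval_update w i) fun t ht => ?_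
  simpa using hP _ ((update_mem_pi_iff_of_mem hw).mpr fun _ => ht)
end

section
/- For the function f((zₙ)) = ∑_{n=1}^∞ zₙⁿ/n² on the infinite polydisc, the directional derivative in the direction ν = (1,1,1,…) at the point p_m = (z_{m,1},…,z_{m,m},0,0,…) with z_{m,n} = 1 − 1/m equals ∑_{n=1}^m (1 − 1/m)^{n−1}/n, and this quantity tends to +∞ as m → ∞. -/
/-!
Differentiation: at a point whose coordinates all lie in a closed disc of radius `r < 1`, the
termwise derivatives are dominated by a geometric series on a small ball, so the series may be
differentiated termwise; at `p_m` only the first `m` terms survive.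

Divergence: Bernoulli's inequality gives `(1 - 1/m)^n / (n+1) ≥ 1/(n+1) - 1/m`, so the sum is at
least the harmonic number `H_m` minus `1`.
-/

open Finset Filter

theorem one_div_succ_sub_le_one_sub_pow_div_succ {x : ℝ} (hx₀ : 0 ≤ x) (hx₂ : x ≤ 2) (n : ℕ) :
    1 / ((n : ℝ) + 1) - x ≤ (1 - x) ^ n / ((n : ℝ) + 1) := by
  have bernoulli : 1 + n * -x ≤ (1 + -x) ^ n := one_add_mul_le_pow (by linarith) n
  rw [← sub_eq_add_neg] at bernoulli
  rw [le_div_iff₀ (by positivity), sub_mul, one_div_mul_cancel (by positivity)]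
  nlinarith

theorem sum_range_one_div_succ_sub_one_le (m : ℕ) :
    ∑ n ∈ range m, 1 / ((n : ℝ) + 1) - 1 ≤ ∑ n ∈ range m, (1 - 1 / (m : ℝ)) ^ n / ((n : ℝ) + 1) :=
  calc ∑ n ∈ range m, 1 / ((n : ℝ) + 1) - 1
      ≤ ∑ n ∈ range m, (1 / ((n : ℝ) + 1) - 1 / m) := by
        rw [sum_sub_distrib, sum_const, card_range, nsmul_eq_mul, mul_one_div]
        gcongr
        exact div_self_le_one _
    _ ≤ _ := sum_le_sum fun n _ ↦ one_div_succ_sub_le_one_sub_pow_div_succ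
        (Nat.one_div_cast_nonneg m) (by linarith [Nat.one_sub_one_div_cast_nonneg (α := ℝ) m]) n

theorem tendsto_sum_range_one_sub_one_div_pow_div_succ_atTop :
    Tendsto (fun m : ℕ ↦ ∑ n ∈ range m, (1 - 1 / (m : ℝ)) ^ n / ((n : ℝ) + 1)) atTop atTop :=
  tendsto_atTop_mono sum_range_one_div_succ_sub_one_le <|
    tendsto_atTop_add_const_right _ (-1) Real.tendsto_sum_range_one_div_nat_succ_atTop

section

variable {𝕜 : Type*} [RCLike 𝕜]

theorem hasDerivAt_add_pow_succ_div_sq (c : 𝕜) (n : ℕ) (t : 𝕜) :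
    HasDerivAt (fun s : 𝕜 ↦ (c + s) ^ (n + 1) / ((n : 𝕜) + 1) ^ 2)
      ((c + t) ^ n / ((n : 𝕜) + 1)) t := by
  refine ((((hasDerivAt_id t).const_add c).fun_pow (n + 1)).div_const _).congr_deriv ?_
  rw [id, Nat.add_sub_cancel, Nat.cast_add_one, mul_one]
  field_simp

theorem norm_pow_div_natCast_add_one_pow_le {w : 𝕜} {q : ℝ} (hw : ‖w‖ ≤ q) (k n j : ℕ) :
    ‖w ^ k / ((n : 𝕜) + 1) ^ j‖ ≤ q ^ k := by
  have hn : 1 ≤ ‖(n : 𝕜) + 1‖ := by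
    rw [← Nat.cast_add_one, RCLike.norm_natCast]
    exact_mod_cast Nat.le_add_left 1 n
  rw [norm_div, norm_pow, norm_pow]
  calc ‖w‖ ^ k / ‖(n : 𝕜) + 1‖ ^ j ≤ ‖w‖ ^ k := div_le_self (by positivity) (one_le_pow₀ hn)
    _ ≤ q ^ k := pow_le_pow_left₀ (norm_nonneg w) hw k

theorem hasDerivAt_tsum_add_pow_succ_div_sq {z : ℕ → 𝕜} {r : ℝ} (hr : r < 1)
    (hz : ∀ n, ‖z n‖ ≤ r) :
    HasDerivAt (fun t : 𝕜 ↦ ∑' n, (z n + t) ^ (n + 1) / ((n : 𝕜) + 1) ^ 2)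
      (∑' n, z n ^ n / ((n : 𝕜) + 1)) 0 := by
  set δ := (1 - r) / 2 with hδ
  have h₀ : (0 : 𝕜) ∈ Metric.ball 0 δ := Metric.mem_ball_self (by linarith [hδ])
  have hq₀ : 0 ≤ r + δ := by linarith [norm_nonneg (z 0), hz 0, hδ]
  have hq₁ : r + δ < 1 := by linarith [hδ]
  have hball : ∀ n, ∀ y ∈ Metric.ball (0 : 𝕜) δ, ‖z n + y‖ ≤ r + δ := fun n y hy ↦
    (norm_add_le _ _).trans (add_le_add (hz n) (mem_ball_zero_iff.mp hy).le)
  have hgeom := summable_geometric_of_lt_one hq₀ hq₁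
  have hsum₀ : Summable fun n ↦ (z n + 0) ^ (n + 1) / ((n : 𝕜) + 1) ^ 2 :=
    hgeom.of_norm_bounded fun n ↦ (norm_pow_div_natCast_add_one_pow_le (hball n 0 h₀) _ _ _).trans
      (pow_le_pow_of_le_one hq₀ hq₁.le n.le_succ)
  simpa only [add_zero] using hasDerivAt_tsum_of_isPreconnected hgeom Metric.isOpen_ball
    (convex_ball _ _).isPreconnected (fun n y _ ↦ hasDerivAt_add_pow_succ_div_sq (z n) n y)
    (fun n y hy ↦ by simpa using norm_pow_div_natCast_add_one_pow_le (hball n y hy) n n 1)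
    h₀ hsum₀ h₀

end

/-- For `f((zₙ)ₙ≥1) = ∑_{n=1}^∞ zₙⁿ/n²` (indexed here by `n : ℕ` as
`∑_{n=0}^∞ zₙ^{n+1}/(n+1)²`) on the infinite polydisc, the directional derivative in the
direction `ν = (1,1,1,…)` at the point `p_m` whose first `m` coordinates equal `1 - 1/m` and
whose remaining coordinates vanish equals `∑_{n=1}^m (1 - 1/m)^{n-1}/n`, and this quantity
tends to `+∞` as `m → ∞`. -/
theorem stmt11
    (f : (ℕ → ℂ) → ℂ) (hf : ∀ z : ℕ → ℂ, f z = ∑' n : ℕ, z n ^ (n + 1) / ((n : ℂ) + 1) ^ 2)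
    (p : ℕ → ℕ → ℂ) (hp : ∀ m n : ℕ, p m n = if n < m then (1 : ℂ) - 1 / m else 0) :
    (∀ m : ℕ, 1 ≤ m →
      HasDerivAt (fun t : ℂ => f fun n => p m n + t)
        (∑ n ∈ Finset.range m, ((1 : ℂ) - 1 / m) ^ n / ((n : ℂ) + 1)) 0) ∧
    Tendsto (fun m : ℕ => ∑ n ∈ Finset.range m, ((1 : ℝ) - 1 / m) ^ n / ((n : ℝ) + 1))
      atTop atTop := by
  obtain rfl : f = fun z ↦ ∑' n : ℕ, z n ^ (n + 1) / ((n : ℂ) + 1) ^ 2 := funext hf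
  refine ⟨fun m hm ↦ ?_, tendsto_sum_range_one_sub_one_div_pow_div_succ_atTop⟩
  have hnorm : ‖(1 : ℂ) - 1 / m‖ = 1 - 1 / (m : ℝ) := by
    rw [← Complex.ofReal_natCast, ← Complex.ofReal_one, ← Complex.ofReal_div,
      ← Complex.ofReal_sub, Complex.norm_of_nonneg (Nat.one_sub_one_div_cast_nonneg m)]
  have hpm : ∀ n, ‖p m n‖ ≤ 1 - 1 / (m : ℝ) := fun n ↦ by
    rw [hp]
    split_ifs
    exacts [hnorm.le, by simpa using Nat.one_sub_one_div_cast_nonneg (α := ℝ) m]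
  have hlt : 1 - 1 / (m : ℝ) < 1 := sub_lt_self 1 (Nat.one_div_cast_pos (by omega))
  refine (hasDerivAt_tsum_add_pow_succ_div_sq hlt hpm).congr_deriv ?_
  rw [tsum_eq_sum (s := range m)]
  · exact sum_congr rfl fun n hn ↦ by rw [hp, if_pos (mem_range.mp hn)]
  · intro n hn
    rw [mem_range, not_lt] at hn
    rw [hp, if_neg (by omega), zero_pow (by omega), zero_div]
end

section
/- The sequence ∑_{n=1}^m (1 − 1/m)^{n−1}/n tends to +∞ as m → ∞. -/
/-!
By Bernoulli's inequality `(1 - 1/m)^n ≥ 1 - n/m ≥ 1/2` for `2n ≤ m`, so the sum dominates half of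
the harmonic number `H_{⌊m/2⌋}`, which diverges.
-/

open Finset Filter

lemma half_le_one_sub_one_div_pow {m n : ℕ} (h : 2 * n ≤ m) :
    (1 : ℝ) / 2 ≤ (1 - 1 / m) ^ n := by
  have hm : (2 * n : ℝ) ≤ m := by exact_mod_cast h
  have hinv : (1 : ℝ) / m ≤ 1 := by simpa using Nat.cast_inv_le_one (α := ℝ) m
  have hhalf : (1 : ℝ) / 2 ≤ 1 + n * -(1 / m) := by
    rcases (Nat.cast_nonneg m : (0 : ℝ) ≤ m).eq_or_lt with hm0 | hm0
    · rw [← hm0]; norm_num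
    · rw [mul_neg, mul_one_div, ← sub_eq_add_neg, le_sub_comm, div_le_iff₀ hm0]
      linarith
  calc (1 : ℝ) / 2 ≤ 1 + n * -(1 / m) := hhalf
    _ ≤ (1 + -(1 / m)) ^ n := one_add_mul_le_pow (by linarith) n
    _ = (1 - 1 / m) ^ n := by rw [← sub_eq_add_neg]

lemma sum_range_div_two_one_div_le (m : ℕ) :
    (∑ n ∈ range (m / 2), 1 / ((n : ℝ) + 1)) / 2 ≤
      ∑ n ∈ range m, ((1 : ℝ) - 1 / m) ^ n / ((n : ℝ) + 1) := by
  have hbase : (0 : ℝ) ≤ 1 - 1 / m := by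
    simpa [sub_nonneg] using Nat.cast_inv_le_one (α := ℝ) m
  calc (∑ n ∈ range (m / 2), 1 / ((n : ℝ) + 1)) / 2
      = ∑ n ∈ range (m / 2), (1 / 2 : ℝ) / ((n : ℝ) + 1) := by
        rw [sum_div]
        exact sum_congr rfl fun n _ => by ring
    _ ≤ ∑ n ∈ range (m / 2), (1 - 1 / (m : ℝ)) ^ n / ((n : ℝ) + 1) := by
        refine sum_le_sum fun n hn => ?_
        have h2n : 2 * n ≤ m := by have := mem_range.mp hn; omega
        gcongr
        exact half_le_one_sub_one_div_pow h2n
    _ ≤ ∑ n ∈ range m, (1 - 1 / (m : ℝ)) ^ n / ((n : ℝ) + 1) :=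
        sum_le_sum_of_subset_of_nonneg (range_subset_range.mpr (Nat.div_le_self m 2))
          fun n _ _ => by positivity

/-- The sequence `∑_{n=1}^m (1 - 1/m)^{n-1}/n` tends to `+∞` as `m → ∞`. -/
theorem stmt12 :
    Tendsto (fun m : ℕ => ∑ n ∈ Finset.range m, ((1 : ℝ) - 1 / m) ^ n / ((n : ℝ) + 1))
      atTop atTop :=
  tendsto_atTop_mono sum_range_div_two_one_div_le <|
    (Real.tendsto_sum_range_one_div_nat_succ_atTop.comp
      (Nat.tendsto_div_const_atTop two_ne_zero)).atTop_div_const two_pos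
end

section
/- Let G ⊂ ℂⁿ be open and connected, and let Pₖ be polynomials converging uniformly on G with respect to the chordal metric to a function f : G → ℂ ∪ {∞}. If f(z₀) = ∞ for some z₀ ∈ G, then f ≡ ∞ on G. -/
/-- The chordal distance on the Riemann sphere `ℂ ∪ {∞} = OnePoint ℂ`. -/
noncomputable def chordal (a b : OnePoint ℂ) : ℝ :=
  Option.rec
    (Option.rec 0 (fun y => 1 / Real.sqrt (1 + ‖y‖ ^ 2)) b)
    (fun x => Option.rec (1 / Real.sqrt (1 + ‖x‖ ^ 2))
      (fun y => ‖x - y‖ /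
        (Real.sqrt (1 + ‖x‖ ^ 2) * Real.sqrt (1 + ‖y‖ ^ 2))) b) a

/-!
Near a point `a` with `f a = ∞`, the values of `f` and, for large `k`, those of `Pₖ` lie in the
chordal disc `{|w| ≥ 1} ∪ {∞}`, on which `w ↦ 1/w` is Lipschitz from the chordal to the Euclidean
metric. So the `1/Pₖ` are zero-free holomorphic functions converging uniformly on a ball around
`a` to `1/f` (with `1/∞ = 0`), which vanishes at `a`; Hurwitz's theorem on each complex line
through `a` gives `1/f ≡ 0`, i.e. `f ≡ ∞`, on the ball. Thus `{f = ∞}` is open in `G`. It is also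
closed in `G`, since `z ↦ χ(f z, ∞)` is a uniform limit of continuous functions, and `G` is
connected.
-/

open Filter Topology Metric Set OnePoint

lemma chordal_coe_infty (x : ℂ) : chordal x ∞ = (√(1 + ‖x‖ ^ 2))⁻¹ := one_div _

lemma chordal_coe_coe (x y : ℂ) :
    chordal x y = ‖x - y‖ / (√(1 + ‖x‖ ^ 2) * √(1 + ‖y‖ ^ 2)) := rfl

lemma chordal_infty_infty : chordal ∞ ∞ = 0 := rfl

lemma chordal_coe_infty_pos (x : ℂ) : 0 < chordal x ∞ := by
  rw [chordal_coe_infty]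
  positivity

lemma continuous_chordal_coe_infty : Continuous fun x : ℂ => chordal x ∞ := by
  simp only [chordal_coe_infty]
  exact Continuous.inv₀ (by fun_prop) fun x => by positivity

lemma chordal_coe_infty_le_chordal_coe_infty {x y : ℂ} :
    chordal x ∞ ≤ chordal y ∞ ↔ ‖y‖ ≤ ‖x‖ := by
  rw [chordal_coe_infty, chordal_coe_infty, inv_le_inv₀ (by positivity) (by positivity),
    Real.sqrt_le_sqrt_iff (by positivity), add_le_add_iff_left,
    sq_le_sq₀ (norm_nonneg y) (norm_nonneg x)]

lemma abs_sqrt_one_add_sq_sub_le (a b : ℝ) : |√(1 + a ^ 2) - √(1 + b ^ 2)| ≤ |a - b| := by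
  have hprod : 1 + a * b ≤ √(1 + a ^ 2) * √(1 + b ^ 2) := by
    rw [← Real.sqrt_mul (by positivity)]
    exact Real.le_sqrt_of_sq_le (by nlinarith [sq_nonneg (a - b)])
  rw [← sq_le_sq, sub_sq, Real.sq_sqrt (by positivity), Real.sq_sqrt (by positivity)]
  nlinarith

lemma abs_chordal_coe_infty_sub_le (x : ℂ) (y : OnePoint ℂ) :
    |chordal x ∞ - chordal y ∞| ≤ chordal x y := by
  induction y using OnePoint.rec with
  | infty => rw [chordal_infty_infty, sub_zero, abs_of_pos (chordal_coe_infty_pos x)]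
  | coe w =>
    have hSx : 0 < √(1 + ‖x‖ ^ 2) := by positivity
    have hSw : 0 < √(1 + ‖w‖ ^ 2) := by positivity
    rw [chordal_coe_infty, chordal_coe_infty, chordal_coe_coe, inv_sub_inv hSx.ne' hSw.ne',
      abs_div, abs_of_pos (mul_pos hSx hSw)]
    gcongr
    calc |√(1 + ‖w‖ ^ 2) - √(1 + ‖x‖ ^ 2)| ≤ |‖w‖ - ‖x‖| := abs_sqrt_one_add_sq_sub_le _ _
      _ ≤ ‖w - x‖ := abs_norm_sub_norm_le w x
      _ = ‖x - w‖ := norm_sub_rev w x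

/-- `y ↦ 1 / y` on the Riemann sphere, with `∞ ↦ 0` and, as a junk value, `0 ↦ 0⁻¹ = 0`. -/
noncomputable def sphereInv (y : OnePoint ℂ) : ℂ := y.elim 0 (·⁻¹)

lemma sphereInv_infty : sphereInv ∞ = 0 := rfl

lemma sphereInv_coe (w : ℂ) : sphereInv w = w⁻¹ := rfl

lemma one_le_norm_of_chordal_infty_le {x : ℂ} (hx : chordal x ∞ ≤ chordal (1 : ℂ) ∞) :
    1 ≤ ‖x‖ := by
  simpa using chordal_coe_infty_le_chordal_coe_infty.1 hx

lemma eq_infty_of_sphereInv_eq_zero {y : OnePoint ℂ} (hy : chordal y ∞ ≤ chordal (1 : ℂ) ∞)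
    (h : sphereInv y = 0) : y = ∞ := by
  induction y using OnePoint.rec with
  | infty => rfl
  | coe w =>
    rw [sphereInv_coe, inv_eq_zero] at h
    subst h
    exact absurd (one_le_norm_of_chordal_infty_le hy) (by simp)

lemma sqrt_one_add_sq_le_sqrt_two_mul {t : ℝ} (ht : 1 ≤ t) : √(1 + t ^ 2) ≤ √2 * t := by
  calc √(1 + t ^ 2) ≤ √(2 * t ^ 2) := Real.sqrt_le_sqrt (by nlinarith)
    _ = √2 * t := by rw [Real.sqrt_mul zero_le_two, Real.sqrt_sq (by linarith)]

lemma dist_inv_sphereInv_le {x : ℂ} {y : OnePoint ℂ} (hx : chordal x ∞ ≤ chordal (1 : ℂ) ∞)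
    (hy : chordal y ∞ ≤ chordal (1 : ℂ) ∞) : dist x⁻¹ (sphereInv y) ≤ 2 * chordal x y := by
  have hx1 := one_le_norm_of_chordal_infty_le hx
  have hSx := sqrt_one_add_sq_le_sqrt_two_mul hx1
  have h2 : √2 * √2 = 2 := Real.mul_self_sqrt zero_le_two
  induction y using OnePoint.rec with
  | infty =>
    rw [sphereInv_infty, dist_zero_right, norm_inv, chordal_coe_infty, ← one_div,
      ← one_div, mul_one_div, div_le_div_iff₀ (by linarith) (by positivity)]
    nlinarith [Real.sqrt_nonneg 2]
  | coe w =>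
    have hw1 := one_le_norm_of_chordal_infty_le hy
    have hSw := sqrt_one_add_sq_le_sqrt_two_mul hw1
    have hx0 : x ≠ 0 := norm_pos_iff.1 (by linarith)
    have hw0 : w ≠ 0 := norm_pos_iff.1 (by linarith)
    have hprod : √(1 + ‖x‖ ^ 2) * √(1 + ‖w‖ ^ 2) ≤ 2 * (‖x‖ * ‖w‖) := by
      calc √(1 + ‖x‖ ^ 2) * √(1 + ‖w‖ ^ 2) ≤ (√2 * ‖x‖) * (√2 * ‖w‖) := by gcongr
        _ = 2 * (‖x‖ * ‖w‖) := by linear_combination (‖x‖ * ‖w‖) * h2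
    rw [sphereInv_coe, dist_eq_norm, inv_sub_inv hx0 hw0, norm_div, norm_mul, norm_sub_rev w x,
      chordal_coe_coe, mul_div_assoc', div_le_div_iff₀ (by positivity) (by positivity)]
    nlinarith [norm_nonneg (x - w)]

lemma exists_closedBall_subset_forall_sphere {X : Type*} [PseudoMetricSpace X] {U : Set X}
    {z₀ : X} {p : X → Prop} (hU : U ∈ 𝓝 z₀) (hp : ∀ᶠ z in 𝓝[≠] z₀, p z) :
    ∃ δ > 0, closedBall z₀ δ ⊆ U ∧ ∀ z ∈ sphere z₀ δ, p z := by
  obtain ⟨ε, hε, hball⟩ := eventually_nhds_iff_ball.1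
    ((show ∀ᶠ z in 𝓝 z₀, z ∈ U from hU).and (eventually_nhdsWithin_iff.1 hp))
  have hsub : closedBall z₀ (ε / 2) ⊆ ball z₀ ε := closedBall_subset_ball (by linarith)
  refine ⟨ε / 2, by positivity, fun z hz => (hball z (hsub hz)).1, fun z hz => ?_⟩
  refine (hball z (hsub (sphere_subset_closedBall hz))).2 fun h => ?_
  rw [h, mem_sphere, dist_self] at hz
  linarith

/- Hurwitz's theorem. If the zero of `H` at `z₀` were isolated, then for large `k` we would have
`|1 / φ k| ≤ 2 / m` on a small circle around `z₀`, where `m = min |H|` on that circle, while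
`|1 / φ k z₀| → ∞`: this contradicts the maximum principle. -/
theorem eqOn_zero_of_tendstoLocallyUniformlyOn_of_ne_zero {ι : Type*} {l : Filter ι} [l.NeBot]
    {φ : ι → ℂ → ℂ} {H : ℂ → ℂ} {U : Set ℂ} (hU : IsOpen U) (hUc : IsPreconnected U)
    (hφ : ∀ᶠ k in l, DifferentiableOn ℂ (φ k) U ∧ ∀ z ∈ U, φ k z ≠ 0)
    (hlim : TendstoLocallyUniformlyOn φ H l U) {z₀ : ℂ} (hz₀ : z₀ ∈ U) (hH : H z₀ = 0) :
    EqOn H 0 U := by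
  have hHa : AnalyticOnNhd ℂ H U :=
    (hlim.differentiableOn (hφ.mono fun _ hk => hk.1) hU).analyticOnNhd hU
  refine hHa.eqOn_zero_of_preconnected_of_eventuallyEq_zero hUc hz₀ ?_
  refine (hHa z₀ hz₀).eventually_eq_zero_or_eventually_ne_zero.resolve_right fun hne => ?_
  obtain ⟨δ, hδ, hδU, hδH⟩ := exists_closedBall_subset_forall_sphere (hU.mem_nhds hz₀) hne
  have hsphere : sphere z₀ δ ⊆ U := sphere_subset_closedBall.trans hδU
  obtain ⟨m, hm, hHm⟩ : ∃ m > 0, ∀ z ∈ sphere z₀ δ, m ≤ ‖H z‖ := by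
    obtain ⟨w, hw, hmin⟩ := (isCompact_sphere z₀ δ).exists_isMinOn
      (NormedSpace.sphere_nonempty.2 hδ.le) (hHa.continuousOn.mono hsphere).norm
    exact ⟨‖H w‖, norm_pos_iff.2 (hδH w hw), fun z hz => hmin hz⟩
  have hunif : TendstoUniformlyOn φ H l (sphere z₀ δ) :=
    (tendstoLocallyUniformlyOn_iff_forall_isCompact hU).1 hlim _ hsphere (isCompact_sphere z₀ δ)
  have hcentre : ∀ᶠ k in l, ‖φ k z₀‖ < m / 2 := by
    have := tendsto_zero_iff_norm_tendsto_zero.1 (hH ▸ hlim.tendsto_at hz₀)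
    exact this.eventually (gt_mem_nhds (by positivity))
  obtain ⟨k, ⟨hdiff, hne0⟩, hclose, hk₀⟩ :=
    (hφ.and ((Metric.tendstoUniformlyOn_iff.1 hunif (m / 2) (by positivity)).and hcentre)).exists
  have hbound : ∀ z ∈ frontier (ball z₀ δ), ‖(φ k z)⁻¹‖ ≤ 2 / m := by
    intro z hz
    rw [frontier_ball z₀ hδ.ne'] at hz
    have : m / 2 ≤ ‖φ k z‖ := by
      linarith [hHm z hz, hclose z hz, dist_eq_norm (H z) (φ k z), norm_sub_norm_le (H z) (φ k z)]
    rw [norm_inv, ← one_div, div_le_div_iff₀ (by linarith) hm]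
    linarith
  have hdiffInv : DiffContOnCl ℂ (fun z => (φ k z)⁻¹) (ball z₀ δ) := by
    refine DifferentiableOn.diffContOnCl ?_
    rw [closure_ball z₀ hδ.ne']
    exact (hdiff.inv hne0).mono hδU
  have hmax := Complex.norm_le_of_forall_mem_frontier_norm_le isBounded_ball hdiffInv hbound
    (subset_closure (mem_ball_self hδ))
  have hpos : 0 < ‖φ k z₀‖ := norm_pos_iff.2 (hne0 z₀ hz₀)
  rw [norm_inv, inv_le_comm₀ hpos (by positivity), inv_div] at hmax
  linarith

theorem Convex.eqOn_zero_of_tendstoLocallyUniformlyOn_of_ne_zero {E : Type*}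
    [NormedAddCommGroup E] [NormedSpace ℂ E] {ι : Type*} {l : Filter ι} [l.NeBot]
    {φ : ι → E → ℂ} {H : E → ℂ} {U : Set E} (hUc : Convex ℝ U) (hU : IsOpen U)
    (hφ : ∀ᶠ k in l, DifferentiableOn ℂ (φ k) U ∧ ∀ z ∈ U, φ k z ≠ 0)
    (hlim : TendstoLocallyUniformlyOn φ H l U) {a : E} (ha : a ∈ U) (hH : H a = 0) :
    EqOn H 0 U := by
  intro b hb
  let L : ℂ → E := fun t => a + t • (b - a)
  have hL : Differentiable ℂ L := by fun_prop
  have hLU : MapsTo L (L ⁻¹' U) U := mapsTo_preimage L U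
  have hVc : Convex ℝ (L ⁻¹' U) := by
    intro s hs t ht μ ν hμ hν hμν
    have : L (μ • s + ν • t) = μ • L s + ν • L t := by
      simp only [L, Complex.real_smul]
      linear_combination (norm := module) -(hμν • a)
    show L _ ∈ U
    rw [this]
    exact hUc hs ht hμ hν hμν
  have := _root_.eqOn_zero_of_tendstoLocallyUniformlyOn_of_ne_zero (hU.preimage hL.continuous)
    hVc.isPreconnected
    (hφ.mono fun k hk => ⟨hk.1.comp hL.differentiableOn hLU, fun t ht => hk.2 _ ht⟩)
    (hlim.comp L hLU hL.continuous.continuousOn) (z₀ := 0) (by simpa [L]) (by simpa [L])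
  simpa [L] using this (show (1 : ℂ) ∈ L ⁻¹' U by simpa [L])

def ChordalTendstoUniformlyOn {ι α : Type*} (F : ι → α → ℂ) (f : α → OnePoint ℂ)
    (l : Filter ι) (s : Set α) : Prop :=
  ∀ ε > 0, ∀ᶠ k in l, ∀ z ∈ s, chordal (F k z) (f z) < ε

namespace ChordalTendstoUniformlyOn

section

variable {ι α : Type*} {F : ι → α → ℂ} {f : α → OnePoint ℂ} {l : Filter ι} {s : Set α}

lemma mono {t : Set α} (h : ChordalTendstoUniformlyOn F f l s) (hts : t ⊆ s) :
    ChordalTendstoUniformlyOn F f l t :=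
  fun ε hε => (h ε hε).mono fun _ hk z hz => hk z (hts hz)

lemma tendstoUniformlyOn_chordal_infty (h : ChordalTendstoUniformlyOn F f l s) :
    TendstoUniformlyOn (fun k z => chordal (F k z) ∞) (fun z => chordal (f z) ∞) l s := by
  refine Metric.tendstoUniformlyOn_iff.2 fun ε hε => (h ε hε).mono fun k hk z hz => ?_
  rw [Real.dist_eq, abs_sub_comm]
  exact (abs_chordal_coe_infty_sub_le _ _).trans_lt (hk z hz)

lemma continuousOn_chordal_infty [TopologicalSpace α] [l.NeBot]
    (h : ChordalTendstoUniformlyOn F f l s) (hF : ∀ᶠ k in l, ContinuousOn (F k) s) :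
    ContinuousOn (fun z => chordal (f z) ∞) s :=
  h.tendstoUniformlyOn_chordal_infty.continuousOn
    (hF.mono fun _ hk => continuous_chordal_coe_infty.comp_continuousOn hk).frequently

lemma eventually_chordal_infty_lt (h : ChordalTendstoUniformlyOn F f l s) {δ ε : ℝ}
    (hf : ∀ z ∈ s, chordal (f z) ∞ ≤ δ) (hδε : δ < ε) :
    ∀ᶠ k in l, ∀ z ∈ s, chordal (F k z) ∞ < ε := by
  refine (h (ε - δ) (by linarith)).mono fun k hk z hz => ?_
  linarith [hf z hz, hk z hz, abs_le.1 (abs_chordal_coe_infty_sub_le (F k z) (f z))]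

lemma tendstoUniformlyOn_inv (h : ChordalTendstoUniformlyOn F f l s)
    (hF : ∀ᶠ k in l, ∀ z ∈ s, chordal (F k z) ∞ ≤ chordal (1 : ℂ) ∞)
    (hf : ∀ z ∈ s, chordal (f z) ∞ ≤ chordal (1 : ℂ) ∞) :
    TendstoUniformlyOn (fun k z => (F k z)⁻¹) (sphereInv ∘ f) l s := by
  refine Metric.tendstoUniformlyOn_iff.2 fun ε hε => ?_
  filter_upwards [hF, h (ε / 2) (by positivity)] with k hFk hk z hz
  rw [dist_comm, Function.comp_apply]
  linarith [dist_inv_sphereInv_le (hFk z hz) (hf z hz), hk z hz]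

end

variable {ι E : Type*} [NormedAddCommGroup E] [NormedSpace ℂ E] {F : ι → E → ℂ}
  {f : E → OnePoint ℂ} {l : Filter ι} [l.NeBot] {G : Set E}

lemma eventually_eq_infty (h : ChordalTendstoUniformlyOn F f l G) (hGo : IsOpen G)
    (hF : ∀ᶠ k in l, DifferentiableOn ℂ (F k) G) {a : E} (ha : a ∈ G) (hfa : f a = ∞) :
    ∀ᶠ z in 𝓝 a, f z = ∞ := by
  set c := chordal (1 : ℂ) ∞
  have hc : 0 < c := chordal_coe_infty_pos 1
  have hcont := h.continuousOn_chordal_infty (hF.mono fun _ hk => hk.continuousOn)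
  obtain ⟨r, hr, hball⟩ : ∃ r > 0, ∀ z ∈ ball a r, z ∈ G ∧ chordal (f z) ∞ < c / 2 := by
    refine eventually_nhds_iff_ball.1 ((hGo.eventually_mem ha).and ?_)
    refine (hcont.continuousAt (hGo.mem_nhds ha)).eventually (gt_mem_nhds ?_)
    show chordal (f a) ∞ < c / 2
    rw [hfa, chordal_infty_infty]
    positivity
  have hconv := h.mono fun z hz => (hball z hz).1
  have hFc : ∀ᶠ k in l, ∀ z ∈ ball a r, chordal (F k z) ∞ ≤ c :=
    (hconv.eventually_chordal_infty_lt (fun z hz => (hball z hz).2.le) (half_lt_self hc)).mono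
      fun _ hk z hz => (hk z hz).le
  have hf : ∀ z ∈ ball a r, chordal (f z) ∞ ≤ c :=
    fun z hz => (hball z hz).2.le.trans (half_le_self hc.le)
  have hφ : ∀ᶠ k in l, DifferentiableOn ℂ (fun z => (F k z)⁻¹) (ball a r) ∧
      ∀ z ∈ ball a r, (F k z)⁻¹ ≠ 0 := by
    filter_upwards [hF, hFc] with k hdiff hk
    have hne : ∀ z ∈ ball a r, F k z ≠ 0 := fun z hz =>
      norm_pos_iff.1 (one_pos.trans_le (one_le_norm_of_chordal_infty_le (hk z hz)))
    exact ⟨(hdiff.mono fun z hz => (hball z hz).1).inv hne, fun z hz => inv_ne_zero (hne z hz)⟩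
  have hzero := (convex_ball a r).eqOn_zero_of_tendstoLocallyUniformlyOn_of_ne_zero isOpen_ball
    hφ (hconv.tendstoUniformlyOn_inv hFc hf).tendstoLocallyUniformlyOn (mem_ball_self hr)
    (by simp [hfa, sphereInv_infty])
  filter_upwards [ball_mem_nhds a hr] with z hz
  exact eq_infty_of_sphereInv_eq_zero (hf z hz) (hzero hz)

theorem eqOn_infty (h : ChordalTendstoUniformlyOn F f l G)
    (hF : ∀ᶠ k in l, DifferentiableOn ℂ (F k) G) (hGo : IsOpen G) (hGc : IsPreconnected G)
    {z₀ : E} (hz₀ : z₀ ∈ G) (hfz₀ : f z₀ = ∞) : ∀ z ∈ G, f z = ∞ := by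
  have hS : IsOpen (G ∩ f ⁻¹' {∞}) := isOpen_iff_mem_nhds.2 fun z hz =>
    (hGo.eventually_mem hz.1).and (h.eventually_eq_infty hGo hF hz.1 hz.2)
  have hT : IsOpen (G ∩ (fun z => chordal (f z) ∞) ⁻¹' {0}ᶜ) :=
    (h.continuousOn_chordal_infty (hF.mono fun _ hk => hk.continuousOn)).isOpen_inter_preimage
      hGo isOpen_compl_singleton
  have hdisj : Disjoint (G ∩ f ⁻¹' {∞}) (G ∩ (fun z => chordal (f z) ∞) ⁻¹' {0}ᶜ) :=
    Set.disjoint_left.2 fun z ⟨_, hz⟩ ⟨_, hz'⟩ => hz' (by simp_all [chordal_infty_infty])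
  have hcover : G ⊆ (G ∩ f ⁻¹' {∞}) ∪ (G ∩ (fun z => chordal (f z) ∞) ⁻¹' {0}ᶜ) := by
    intro z hz
    induction hfz : f z using OnePoint.rec with
    | infty => exact Or.inl ⟨hz, hfz⟩
    | coe w => exact Or.inr ⟨hz, by simp [hfz, (chordal_coe_infty_pos w).ne']⟩
  exact fun z hz => (hGc.subset_left_of_subset_union hS hT hdisj hcover ⟨z₀, hz₀, hz₀, hfz₀⟩ hz).2

end ChordalTendstoUniformlyOn

/-- If `G ⊂ ℂⁿ` is open and connected and polynomials `Pₖ` converge uniformly on `G` with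
respect to the chordal metric to `f : G → ℂ ∪ {∞}`, and `f(z₀) = ∞` for some `z₀ ∈ G`, then
`f ≡ ∞` on `G`. -/
theorem stmt15 (n : ℕ) (G : Set (Fin n → ℂ)) (hGo : IsOpen G) (hGc : IsConnected G)
    (P : ℕ → MvPolynomial (Fin n) ℂ) (f : (Fin n → ℂ) → OnePoint ℂ)
    (hconv : ∀ ε > 0, ∃ K : ℕ, ∀ k ≥ K, ∀ z ∈ G,
      chordal ((MvPolynomial.eval z (P k) : ℂ) : OnePoint ℂ) (f z) < ε)
    (z₀ : Fin n → ℂ) (hz₀ : z₀ ∈ G) (hfz₀ : f z₀ = OnePoint.infty) :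
    ∀ z ∈ G, f z = OnePoint.infty := by
  have h : ChordalTendstoUniformlyOn (fun k z => MvPolynomial.eval z (P k)) f atTop G :=
    fun ε hε => eventually_atTop.2 (hconv ε hε)
  have hP : ∀ k, Differentiable ℂ (fun z => MvPolynomial.eval z (P k)) := fun k =>
    differentiableOn_univ.1
      (AnalyticOnNhd.eval_continuousLinearMap (.id ℂ (Fin n → ℂ)) (P k)).differentiableOn
  exact h.eqOn_infty (.of_forall fun k => (hP k).differentiableOn) hGo hGc.isPreconnected hz₀ hfz₀
end
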